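/- arXiv:1602.00983 — 7 statements merged into one kernel-verified Lean document; each statement's English description precedes it below -/
import Mathlib

section
/- For all real numbers A and B with cosh(B) > 1 (i.e. B ≠ 0) and such that the integrand is defined (cosh(A) ≥ 1, and cosh(A) - x > 0, cosh(B) - x > 0 for all x ∈ [-1,1], i.e. A ≠ 0 and B ≠ 0), one has sinh(B) · ∫_{-1}^{1} (cosh(A) - x)^{-1/2} / (cosh(B) - x)^{3/2} dx = 2 / sinh((A+B)/2), provided sinh((A+B)/2) ≠ 0 and sinh(B) > 0. -/
/-!
Write `a = cosh A`, `b = cosh B`. For `a ≠ b` the integrand has the antiderivative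
`2 / (a - b) * √(a - x) / √(b - x)`, and for `a = b` the antiderivative `(b - x)⁻¹`.
Rationalizing the difference of the values at the endpoints gives one closed form valid in both
cases. The half-angle identities `cosh A - 1 = 2 sinh² (A / 2)` and `cosh A + 1 = 2 cosh² (A / 2)`
remove the square roots, and the addition formula for `sinh ((A + B) / 2)` finishes.
-/

open Real intervalIntegral

theorem rpow_neg_half_div_rpow_three_halves {s t : ℝ} (hs : 0 ≤ s) (ht : 0 < t) :
    s ^ (-(1 : ℝ) / 2) / t ^ ((3 : ℝ) / 2) = (√s * (t * √t))⁻¹ := by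
  rw [neg_div, rpow_neg hs, ← sqrt_eq_rpow, show (3 : ℝ) / 2 = 1 + 1 / 2 by norm_num,
    rpow_add ht, rpow_one, ← sqrt_eq_rpow, div_eq_mul_inv, ← mul_inv]

theorem hasDerivAt_inv_const_sub {b x : ℝ} (hx : x < b) :
    HasDerivAt (fun y ↦ (b - y)⁻¹) (√(b - x) * ((b - x) * √(b - x)))⁻¹ x := by
  have hbx : 0 < b - x := sub_pos.2 hx
  refine (((hasDerivAt_id' x).const_sub b).inv hbx.ne').congr_deriv ?_
  rw [mul_left_comm, mul_self_sqrt hbx.le]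
  simp [sq]

theorem hasDerivAt_sqrt_const_sub_div_sqrt_const_sub {a b x : ℝ} (ha : x < a) (hb : x < b) :
    HasDerivAt (fun y ↦ √(a - y) / √(b - y))
      ((a - b) / 2 * (√(a - x) * ((b - x) * √(b - x)))⁻¹) x := by
  have hax : 0 < a - x := sub_pos.2 ha
  have hbx : 0 < b - x := sub_pos.2 hb
  have hsa : 0 < √(a - x) := sqrt_pos.2 hax
  have hsb : 0 < √(b - x) := sqrt_pos.2 hbx
  refine ((((hasDerivAt_id' x).const_sub a).sqrt hax.ne').div
    (((hasDerivAt_id' x).const_sub b).sqrt hbx.ne') hsb.ne').congr_deriv ?_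
  field_simp
  linear_combination (b - x) * mul_self_sqrt hax.le - (a - x) * mul_self_sqrt hbx.le

theorem integral_rpow_neg_half_div_rpow_three_halves {a b c d : ℝ} (hcd : c ≤ d)
    (ha : d < a) (hb : d < b) :
    ∫ x in c..d, (a - x) ^ (-(1 : ℝ) / 2) / (b - x) ^ ((3 : ℝ) / 2) =
      2 * (d - c) / (√(b - c) * √(b - d) * (√(a - d) * √(b - c) + √(a - c) * √(b - d))) := by
  have hlt : ∀ x ∈ Set.uIcc c d, x < a ∧ x < b := by
    intro x hx
    rw [Set.uIcc_of_le hcd] at hx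
    exact ⟨hx.2.trans_lt ha, hx.2.trans_lt hb⟩
  set g : ℝ → ℝ := fun x ↦ (√(a - x) * ((b - x) * √(b - x)))⁻¹
  have hfg : Set.EqOn (fun x ↦ (a - x) ^ (-(1 : ℝ) / 2) / (b - x) ^ ((3 : ℝ) / 2)) g
      (Set.uIcc c d) := fun x hx ↦
    rpow_neg_half_div_rpow_three_halves (sub_pos.2 (hlt x hx).1).le (sub_pos.2 (hlt x hx).2)
  have hg : IntervalIntegrable g MeasureTheory.volume c d := by
    refine ContinuousOn.intervalIntegrable fun x hx ↦ ?_
    have := sub_pos.2 (hlt x hx).1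
    have := sub_pos.2 (hlt x hx).2
    fun_prop (disch := positivity)
  have hac : 0 < a - c := by linarith
  have had : 0 < a - d := by linarith
  have hbc : 0 < b - c := by linarith
  have hbd : 0 < b - d := by linarith
  rw [integral_congr hfg]
  rcases eq_or_ne a b with rfl | hab
  · rw [integral_eq_sub_of_hasDerivAt (fun x hx ↦ hasDerivAt_inv_const_sub (hlt x hx).2) hg]
    field_simp
    rw [sq_sqrt hac.le, sq_sqrt had.le]
    ring
  · have hF : ∀ x ∈ Set.uIcc c d,
        HasDerivAt (fun y ↦ 2 / (a - b) * (√(a - y) / √(b - y))) (g x) x := fun x hx ↦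
      ((hasDerivAt_sqrt_const_sub_div_sqrt_const_sub (hlt x hx).1 (hlt x hx).2).const_mul
        (2 / (a - b))).congr_deriv (by simp only [g]; field_simp [sub_ne_zero.2 hab])
    rw [integral_eq_sub_of_hasDerivAt hF hg]
    field_simp
    linear_combination √(b - c) ^ 2 * sq_sqrt had.le + (a - d) * sq_sqrt hbc.le
      - √(a - c) ^ 2 * sq_sqrt hbd.le - (b - d) * sq_sqrt hac.le

theorem sqrt_cosh_sub_one {x : ℝ} (hx : 0 ≤ x) : √(cosh x - 1) = √2 * sinh (x / 2) := by
  have h := cosh_two_mul (x / 2)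
  rw [mul_div_cancel₀ x two_ne_zero, cosh_sq] at h
  rw [show cosh x - 1 = 2 * sinh (x / 2) ^ 2 by linarith, sqrt_mul zero_le_two,
    sqrt_sq (sinh_nonneg_iff.2 (by positivity))]

theorem sqrt_cosh_add_one (x : ℝ) : √(cosh x + 1) = √2 * cosh (x / 2) := by
  have h := cosh_two_mul (x / 2)
  rw [mul_div_cancel₀ x two_ne_zero, sinh_sq] at h
  rw [show cosh x + 1 = 2 * cosh (x / 2) ^ 2 by linarith, sqrt_mul zero_le_two,
    sqrt_sq (cosh_pos _).le]

theorem sinh_eq_two_mul_sinh_half_mul_cosh_half (x : ℝ) :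
    sinh x = 2 * sinh (x / 2) * cosh (x / 2) := by
  rw [← sinh_two_mul, mul_div_cancel₀ x two_ne_zero]

theorem bundling_integral_identity_general (A B : ℝ) (hA : 0 < A) (hB : 0 < B) :
    Real.sinh B *
      ∫ x in (-1 : ℝ)..1,
        (Real.cosh A - x) ^ (-(1 : ℝ) / 2) / (Real.cosh B - x) ^ ((3 : ℝ) / 2)
      = 2 / Real.sinh ((A + B) / 2) := by
  rw [integral_rpow_neg_half_div_rpow_three_halves (by norm_num) (one_lt_cosh.2 hA.ne')
    (one_lt_cosh.2 hB.ne')]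
  simp only [sub_neg_eq_add]
  rw [sqrt_cosh_sub_one hA.le, sqrt_cosh_sub_one hB.le, sqrt_cosh_add_one, sqrt_cosh_add_one,
    add_div, sinh_add, sinh_eq_two_mul_sinh_half_mul_cosh_half B]
  have hsA := sinh_pos_iff.2 (half_pos hA)
  have hsB := sinh_pos_iff.2 (half_pos hB)
  have hcA := cosh_pos (A / 2)
  have hcB := cosh_pos (B / 2)
  field_simp
  rw [show √2 ^ 4 = (√2 ^ 2) ^ 2 by ring, sq_sqrt zero_le_two]
  norm_num

theorem bundling_integral_identity (A B : ℝ) (hA : 0 < A) (hB : 0 < B)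
    (hAB : Real.sinh ((A + B) / 2) ≠ 0) (hsB : 0 < Real.sinh B) :
    Real.sinh B *
      ∫ x in (-1 : ℝ)..1,
        (Real.cosh A - x) ^ (-(1 : ℝ) / 2) / (Real.cosh B - x) ^ ((3 : ℝ) / 2)
      = 2 / Real.sinh ((A + B) / 2) :=
  bundling_integral_identity_general A B hA hB
end

section
/- Let p ∈ [−1, 0] and define f(s) = (e^{sp} − 1)/(e^s − 1) for s > 0 (extended continuously by f(0) = p). Then the third derivative of f satisfies f'''(s) ≥ 0 for all s > 0. -/
/-!
Write `f = (e^{sp} - 1) · g` with `g(s) = (e^s - 1)⁻¹`. With `u = e^s` and `q = e^{sp}`, the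
Leibniz rule gives `(u - 1)⁴ f‴ = p³q(u-1)³ - 3p²qu(u-1)² + 3pqu(u²-1) - (q-1)u(u²+4u+1)`.
Dividing by `q` and putting `t = -p ≥ 0`, nonnegativity becomes
`3tu(u²-1) + 3t²u(u-1)² + t³(u-1)³ ≤ (e^{st} - 1) u (u²+4u+1)`.
Bounding `e^{st} - 1` below by its cubic Taylor polynomial, it suffices to compare the coefficients
of `t`, `t²`, `t³`; all three comparisons follow from `3(u² - 1) ≤ s(u² + 4u + 1)`, which is the
hyperbolic Cusa–Huygens inequality `3 sinh s ≤ s (cosh s + 2)`.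
-/

open Real Set

lemma nonneg_of_hasDerivAt_of_nonneg {F F' : ℝ → ℝ} (hF : ∀ x, HasDerivAt F (F' x) x)
    (hF₀ : F 0 = 0) (hF' : ∀ x, 0 ≤ x → 0 ≤ F' x) {x : ℝ} (hx : 0 ≤ x) : 0 ≤ F x := by
  have hmono : MonotoneOn F (Ici 0) :=
    monotoneOn_of_hasDerivWithinAt_nonneg (convex_Ici 0)
      (HasDerivAt.continuousOn fun y _ => hF y) (fun y _ => (hF y).hasDerivWithinAt)
      (fun y hy => hF' y (interior_subset hy))
  simpa [hF₀] using hmono self_mem_Ici hx hx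

namespace Real

lemma sinh_le_mul_cosh {x : ℝ} (hx : 0 ≤ x) : sinh x ≤ x * cosh x := by
  have hderiv (y : ℝ) : HasDerivAt (fun x => x * cosh x - sinh x) (y * sinh y) y :=
    (((hasDerivAt_id' y).fun_mul (hasDerivAt_cosh y)).fun_sub (hasDerivAt_sinh y)).congr_deriv
      (by ring)
  exact sub_nonneg.1 <| nonneg_of_hasDerivAt_of_nonneg hderiv (by simp)
    (fun y hy => mul_nonneg hy (sinh_nonneg_iff.2 hy)) hx

lemma two_mul_cosh_sub_two_le {x : ℝ} (hx : 0 ≤ x) : 2 * cosh x - 2 ≤ x * sinh x := by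
  have hderiv (y : ℝ) :
      HasDerivAt (fun x => x * sinh x - (2 * cosh x - 2)) (y * cosh y - sinh y) y :=
    (((hasDerivAt_id' y).fun_mul (hasDerivAt_sinh y)).fun_sub
      (((hasDerivAt_cosh y).const_mul 2).sub_const 2)).congr_deriv (by ring)
  exact sub_nonneg.1 <| nonneg_of_hasDerivAt_of_nonneg hderiv (by simp)
    (fun y hy => sub_nonneg.2 (sinh_le_mul_cosh hy)) hx

/-- The hyperbolic Cusa–Huygens inequality. -/
lemma three_mul_sinh_le {x : ℝ} (hx : 0 ≤ x) : 3 * sinh x ≤ x * (cosh x + 2) := by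
  have hderiv (y : ℝ) :
      HasDerivAt (fun x => x * (cosh x + 2) - 3 * sinh x) (y * sinh y - (2 * cosh y - 2)) y :=
    (((hasDerivAt_id' y).fun_mul ((hasDerivAt_cosh y).add_const 2)).fun_sub
      ((hasDerivAt_sinh y).const_mul 3)).congr_deriv (by ring)
  exact sub_nonneg.1 <| nonneg_of_hasDerivAt_of_nonneg hderiv (by simp)
    (fun y hy => sub_nonneg.2 (two_mul_cosh_sub_two_le hy)) hx

end Real

lemma three_mul_exp_sq_sub_one_le {s : ℝ} (hs : 0 ≤ s) :
    3 * (exp s ^ 2 - 1) ≤ s * (exp s ^ 2 + 4 * exp s + 1) := by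
  have h := mul_le_mul_of_nonneg_left (three_mul_sinh_le hs) (by positivity : 0 ≤ 2 * exp s)
  rw [sinh_eq, cosh_eq, exp_neg] at h
  field_simp at h
  linarith

lemma six_mul_sub_one_sq_le_of_three_mul_sq_sub_one_le {u s : ℝ} (hu : 1 ≤ u)
    (h : 3 * (u ^ 2 - 1) ≤ s * (u ^ 2 + 4 * u + 1)) :
    6 * (u - 1) ^ 2 ≤ s ^ 2 * (u ^ 2 + 4 * u + 1) := by
  have hA : 0 < u ^ 2 + 4 * u + 1 := by positivity
  have hsq := pow_le_pow_left₀ (by nlinarith) h 2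
  refine le_of_mul_le_mul_left ?_ hA
  calc (u ^ 2 + 4 * u + 1) * (6 * (u - 1) ^ 2) = (3 * (u ^ 2 - 1)) ^ 2 - 3 * (u - 1) ^ 4 := by
        ring
    _ ≤ (s * (u ^ 2 + 4 * u + 1)) ^ 2 := by linarith [pow_nonneg (sub_nonneg.2 hu) 4]
    _ = (u ^ 2 + 4 * u + 1) * (s ^ 2 * (u ^ 2 + 4 * u + 1)) := by ring

lemma six_mul_sub_one_pow_three_le_of_three_mul_sq_sub_one_le {u s : ℝ} (hu : 1 ≤ u)
    (h : 3 * (u ^ 2 - 1) ≤ s * (u ^ 2 + 4 * u + 1)) :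
    6 * (u - 1) ^ 3 ≤ s ^ 3 * u * (u ^ 2 + 4 * u + 1) := by
  have hA : 0 < (u ^ 2 + 4 * u + 1) ^ 2 := by positivity
  have hcube := pow_le_pow_left₀ (by nlinarith) h 3
  have hrest : 0 ≤ 3 * (u - 1) ^ 4 * (7 * u ^ 3 + 18 * u ^ 2 + 9 * u + 2) := by
    have := pow_nonneg (sub_nonneg.2 hu) 4
    positivity
  refine le_of_mul_le_mul_left ?_ hA
  calc (u ^ 2 + 4 * u + 1) ^ 2 * (6 * (u - 1) ^ 3)
      = u * (3 * (u ^ 2 - 1)) ^ 3 - 3 * (u - 1) ^ 4 * (7 * u ^ 3 + 18 * u ^ 2 + 9 * u + 2) := by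
        ring
    _ ≤ u * (s * (u ^ 2 + 4 * u + 1)) ^ 3 := by
        linarith [mul_le_mul_of_nonneg_left hcube (by positivity : (0:ℝ) ≤ u)]
    _ = (u ^ 2 + 4 * u + 1) ^ 2 * (s ^ 3 * u * (u ^ 2 + 4 * u + 1)) := by ring

lemma Set.EqOn.iteratedDeriv_succ_of_hasDerivAt {𝕜 F : Type*} [NontriviallyNormedField 𝕜]
    [NormedAddCommGroup F] [NormedSpace 𝕜 F] {U : Set 𝕜} (hU : IsOpen U) {n : ℕ}
    {f g g' : 𝕜 → F} (hfg : EqOn (iteratedDeriv n f) g U)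
    (hg : ∀ x ∈ U, HasDerivAt g (g' x) x) : EqOn (iteratedDeriv (n + 1) f) g' U := by
  intro x hx
  rw [iteratedDeriv_succ, (hfg.eventuallyEq_of_mem (hU.mem_nhds hx)).deriv_eq]
  exact (hg x hx).deriv

lemma iteratedDeriv_inv_exp_sub_one {s : ℝ} (hs : s ≠ 0) :
    iteratedDeriv 1 (fun s => (exp s - 1)⁻¹) s = -exp s / (exp s - 1) ^ 2 ∧
    iteratedDeriv 2 (fun s => (exp s - 1)⁻¹) s = exp s * (exp s + 1) / (exp s - 1) ^ 3 ∧
    iteratedDeriv 3 (fun s => (exp s - 1)⁻¹) s =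
      -(exp s * (exp s ^ 2 + 4 * exp s + 1)) / (exp s - 1) ^ 4 := by
  have hne {x : ℝ} (hx : x ∈ ({0}ᶜ : Set ℝ)) : exp x - 1 ≠ 0 :=
    sub_ne_zero.2 fun h => hx (exp_eq_one_iff x |>.1 h)
  have hE (x : ℝ) := (hasDerivAt_exp x).sub_const 1
  have h₀ : EqOn (iteratedDeriv 0 fun s => (exp s - 1)⁻¹) (fun s => (exp s - 1)⁻¹) {0}ᶜ := by
    simp [EqOn]
  have h₁ := h₀.iteratedDeriv_succ_of_hasDerivAt isOpen_compl_singleton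
    (g' := fun s => -exp s / (exp s - 1) ^ 2) fun x hx => by
      simpa using (hE x).fun_inv (hne hx)
  have h₂ := h₁.iteratedDeriv_succ_of_hasDerivAt isOpen_compl_singleton
    (g' := fun s => exp s * (exp s + 1) / (exp s - 1) ^ 3) fun x hx => by
      have := hne hx
      refine ((hasDerivAt_exp x).fun_neg.fun_div ((hE x).fun_pow 2)
        (pow_ne_zero 2 this)).congr_deriv ?_
      field_simp; ring
  have h₃ := h₂.iteratedDeriv_succ_of_hasDerivAt isOpen_compl_singleton
    (g' := fun s => -(exp s * (exp s ^ 2 + 4 * exp s + 1)) / (exp s - 1) ^ 4) fun x hx => by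
      have := hne hx
      refine (((hasDerivAt_exp x).fun_mul ((hasDerivAt_exp x).add_const 1)).fun_div
        ((hE x).fun_pow 3) (pow_ne_zero 3 this)).congr_deriv ?_
      field_simp; ring
  exact ⟨h₁ hs, h₂ hs, h₃ hs⟩

lemma iteratedDeriv_exp_mul_sub_one {p : ℝ} {n : ℕ} (hn : 0 < n) (s : ℝ) :
    iteratedDeriv n (fun s => exp (s * p) - 1) s = p ^ n * exp (s * p) := by
  have h : (fun s => exp (s * p) - 1) = fun s => -1 + exp (p * s) := by
    ext s; rw [mul_comm]; ring
  simp only [h, iteratedDeriv_const_add hn, iteratedDeriv_exp_const_mul, mul_comm p s]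

lemma iteratedDeriv_three_exp_mul_sub_one_div {p s : ℝ} (hs : s ≠ 0) :
    iteratedDeriv 3 (fun s => (exp (s * p) - 1) / (exp s - 1)) s =
      (p ^ 3 * exp (s * p) * (exp s - 1) ^ 3 - 3 * p ^ 2 * exp (s * p) * exp s * (exp s - 1) ^ 2
        + 3 * p * exp (s * p) * exp s * (exp s ^ 2 - 1)
        - (exp (s * p) - 1) * exp s * (exp s ^ 2 + 4 * exp s + 1)) / (exp s - 1) ^ 4 := by
  have hne : exp s - 1 ≠ 0 := sub_ne_zero.2 fun h => hs (exp_eq_one_iff s |>.1 h)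
  have ha : ContDiffAt ℝ 3 (fun s => exp (s * p) - 1) s := by fun_prop
  have hg : ContDiffAt ℝ 3 (fun s => (exp s - 1)⁻¹) s :=
    (by fun_prop : ContDiffAt ℝ 3 (fun s => exp s - 1) s).inv hne
  obtain ⟨h₁, h₂, h₃⟩ := iteratedDeriv_inv_exp_sub_one hs
  simp only [div_eq_mul_inv (exp (_ * p) - 1)]
  rw [iteratedDeriv_fun_mul ha hg]
  simp only [Finset.sum_range_succ, Finset.range_one, Finset.sum_singleton, Nat.reduceAdd,
    Nat.reduceSub, Nat.choose_zero_right, Nat.choose_one_right, Nat.choose_succ_self_right,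
    Nat.choose_self, Nat.cast_one, Nat.cast_ofNat, Order.lt_one_iff, Order.lt_two_iff, zero_le,
    Nat.ofNat_pos, Nat.add_one_sub_one, tsub_zero, tsub_self, one_mul, pow_one, iteratedDeriv_zero,
    iteratedDeriv_exp_mul_sub_one, h₁, h₂, h₃]
  field_simp
  ring

lemma third_deriv_numerator_nonneg {p s : ℝ} (hp : p ≤ 0) (hs : 0 ≤ s) :
    0 ≤ p ^ 3 * exp (s * p) * (exp s - 1) ^ 3 - 3 * p ^ 2 * exp (s * p) * exp s * (exp s - 1) ^ 2
      + 3 * p * exp (s * p) * exp s * (exp s ^ 2 - 1)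
      - (exp (s * p) - 1) * exp s * (exp s ^ 2 + 4 * exp s + 1) := by
  obtain ⟨t, ht, rfl⟩ : ∃ t, 0 ≤ t ∧ p = -t := ⟨-p, by linarith, by ring⟩
  have hu : 1 ≤ exp s := one_le_exp hs
  have hst : 0 ≤ s * t := mul_nonneg hs ht
  have htaylor : 1 + s * t + (s * t) ^ 2 / 2 + (s * t) ^ 3 / 6 ≤ exp (s * t) := by
    simpa [Finset.sum_range_succ, Nat.factorial] using sum_le_exp_of_nonneg hst 4
  have h₁ := three_mul_exp_sq_sub_one_le hs
  have h₂ := six_mul_sub_one_sq_le_of_three_mul_sq_sub_one_le hu h₁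
  have h₃ := six_mul_sub_one_pow_three_le_of_three_mul_sq_sub_one_le hu h₁
  have hprod : exp (s * -t) * exp (s * t) = 1 := by rw [← exp_add]; simp
  set u := exp s
  have hA : 0 ≤ u * (u ^ 2 + 4 * u + 1) := by positivity
  have key : 3 * t * u * (u ^ 2 - 1) + 3 * t ^ 2 * u * (u - 1) ^ 2 + t ^ 3 * (u - 1) ^ 3
      ≤ (exp (s * t) - 1) * u * (u ^ 2 + 4 * u + 1) :=
    calc 3 * t * u * (u ^ 2 - 1) + 3 * t ^ 2 * u * (u - 1) ^ 2 + t ^ 3 * (u - 1) ^ 3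
        ≤ (s * t + (s * t) ^ 2 / 2 + (s * t) ^ 3 / 6) * (u * (u ^ 2 + 4 * u + 1)) := by
          linarith [mul_le_mul_of_nonneg_left h₁ (by positivity : 0 ≤ t * u),
            mul_le_mul_of_nonneg_left h₂ (by positivity : 0 ≤ t ^ 2 * u),
            mul_le_mul_of_nonneg_left h₃ (by positivity : 0 ≤ t ^ 3)]
      _ ≤ (exp (s * t) - 1) * u * (u ^ 2 + 4 * u + 1) := by
          rw [mul_assoc]; exact mul_le_mul_of_nonneg_right (by linarith) hA
  linear_combination exp (s * -t) * key + u * (u ^ 2 + 4 * u + 1) * hprod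

theorem third_deriv_nonneg (p : ℝ) (hp : p ∈ Set.Icc (-1 : ℝ) 0)
    (f : ℝ → ℝ) (hf : ∀ s, f s = (Real.exp (s * p) - 1) / (Real.exp s - 1)) :
    ∀ s > (0 : ℝ), 0 ≤ iteratedDeriv 3 f s := by
  intro s hs
  rw [show f = _ from funext hf, iteratedDeriv_three_exp_mul_sub_one_div hs.ne']
  exact div_nonneg (third_deriv_numerator_nonneg hp.2 hs.le) (by positivity)
end

section
/- Let p ∈ [−1, 0]. For every integer k ≥ 0, the quantity a_k = (p+3)^k (p−1)^3 + (p+2)^k (−3p³ + 6p² − 4) + (p+1)^k (3p³ − 3p² − 3p − 1) − p^{k+3} + 3^k + 4·2^k + 1 is nonnegative. -/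
noncomputable def Aa (p : ℝ) (k : ℕ) : ℝ :=
  (p + 3) ^ k * (p - 1) ^ 3 + (p + 2) ^ k * (-3 * p ^ 3 + 6 * p ^ 2 - 4)
    + (p + 1) ^ k * (3 * p ^ 3 - 3 * p ^ 2 - 3 * p - 1) - p ^ (k + 3)
    + 3 ^ k + 4 * 2 ^ k + 1

noncomputable def Bb (p : ℝ) (k : ℕ) : ℝ := Aa p (k + 1) - Aa p k
noncomputable def Cc (p : ℝ) (k : ℕ) : ℝ := Bb p (k + 1) - 2 * Bb p k
noncomputable def Dd (p : ℝ) (k : ℕ) : ℝ := Cc p (k + 1) - (p + 1) * Cc p k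
noncomputable def Ee (p : ℝ) (k : ℕ) : ℝ := Dd p (k + 1) - (p + 2) * Dd p k
noncomputable def Ff (p : ℝ) (k : ℕ) : ℝ := Ee p (k + 2) - p ^ 2 * Ee p k
noncomputable def Gg (p : ℝ) (k : ℕ) : ℝ := Ff p (k + 1) - (p + 3) * Ff p k

lemma Gg_eq (p : ℝ) (k : ℕ) :
    Gg p k = (-36 * p + 54 * p ^ 2 - 14 * p ^ 3 - 6 * p ^ 4 + 2 * p ^ 5) * 3 ^ k := by
  simp only [Gg, Ff, Ee, Dd, Cc, Bb, Aa]
  ring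

theorem taylor_coeff_nonneg (p : ℝ) (hp : p ∈ Set.Icc (-1 : ℝ) 0) (k : ℕ) :
    0 ≤ (p + 3) ^ k * (p - 1) ^ 3 + (p + 2) ^ k * (-3 * p ^ 3 + 6 * p ^ 2 - 4)
        + (p + 1) ^ k * (3 * p ^ 3 - 3 * p ^ 2 - 3 * p - 1) - p ^ (k + 3)
        + 3 ^ k + 4 * 2 ^ k + 1 := by
  obtain ⟨hp1, hp2⟩ := hp
  have hG : ∀ k, 0 ≤ Gg p k := by
    intro k
    rw [Gg_eq]
    have h3 : (0:ℝ) ≤ 3 ^ k := by positivity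
    have hc : (0:ℝ) ≤ -36 * p + 54 * p ^ 2 - 14 * p ^ 3 - 6 * p ^ 4 + 2 * p ^ 5 := by
      nlinarith [sq_nonneg p, sq_nonneg (p + 1), mul_nonneg (neg_nonneg.2 hp2) (sq_nonneg p),
        mul_nonneg (mul_nonneg (neg_nonneg.2 hp2) (sq_nonneg p)) (sq_nonneg p),
        mul_nonneg (neg_nonneg.2 hp2) (sq_nonneg (p + 1)),
        mul_nonneg (mul_nonneg (neg_nonneg.2 hp2) (sq_nonneg p)) (sq_nonneg (p+1))]
    exact mul_nonneg hc h3
  have hF : ∀ k, 0 ≤ Ff p k := by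
    intro k
    induction k with
    | zero =>
      have : Ff p 0 = -24 * p + 86 * p ^ 2 - 42 * p ^ 3 - 50 * p ^ 4 + 18 * p ^ 5 + 12 * p ^ 6 := by
        simp only [Ff, Ee, Dd, Cc, Bb, Aa]; ring
      rw [this]
      nlinarith [sq_nonneg p, sq_nonneg (p + 1), mul_nonneg (neg_nonneg.2 hp2) (sq_nonneg p),
        mul_nonneg (mul_nonneg (neg_nonneg.2 hp2) (sq_nonneg p)) (sq_nonneg p),
        mul_nonneg (neg_nonneg.2 hp2) (sq_nonneg (p + 1)),
        mul_nonneg (sq_nonneg p) (sq_nonneg (p+1)),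
        mul_nonneg (mul_nonneg (neg_nonneg.2 hp2) (sq_nonneg p)) (sq_nonneg (p+1))]
    | succ n ih =>
      have hrec : Ff p (n + 1) = (p + 3) * Ff p n + Gg p n := by
        simp only [Gg]; ring
      rw [hrec]
      have hp3 : (0:ℝ) ≤ p + 3 := by linarith
      have := hG n
      nlinarith [mul_nonneg hp3 ih]
  have hE : ∀ k, 0 ≤ Ee p k := by
    intro k
    induction k using Nat.strong_induction_on with
    | _ k ih =>
      match k with
      | 0 =>
        have : Ee p 0 = 6 * (p * (1 - p)) ^ 2 := by
          simp only [Ee, Dd, Cc, Bb, Aa]; ring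
        rw [this]; positivity
      | 1 =>
        have : Ee p 1 = -4 * p + 24 * p ^ 2 - 20 * p ^ 3 - 12 * p ^ 4 + 12 * p ^ 5 := by
          simp only [Ee, Dd, Cc, Bb, Aa]; ring
        rw [this]
        nlinarith [sq_nonneg p, mul_nonneg (neg_nonneg.2 hp2) (sq_nonneg p),
          mul_nonneg (mul_nonneg (neg_nonneg.2 hp2) (sq_nonneg p)) (sq_nonneg p),
          mul_nonneg (neg_nonneg.2 hp2) (sq_nonneg (p + 1)),
          mul_nonneg (sq_nonneg p) (sq_nonneg (p+1)),
          mul_nonneg (mul_nonneg (neg_nonneg.2 hp2) (sq_nonneg p)) (sq_nonneg (p+1))]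
      | (n + 2) =>
        have hrec : Ee p (n + 2) = p ^ 2 * Ee p n + Ff p n := by
          simp only [Ff]; ring
        rw [hrec]
        have h1 := ih n (by omega)
        have h2 := hF n
        nlinarith [mul_nonneg (sq_nonneg p) h1]
  have hp1' : (0:ℝ) ≤ p + 1 := by linarith
  have hp2' : (0:ℝ) ≤ p + 2 := by linarith
  have hD : ∀ k, 0 ≤ Dd p k := by
    intro k
    induction k with
    | zero =>
      have : Dd p 0 = 0 := by simp only [Dd, Cc, Bb, Aa]; ring
      rw [this]
    | succ n ih =>
      have hrec : Dd p (n + 1) = (p + 2) * Dd p n + Ee p n := by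
        simp only [Ee]; ring
      rw [hrec]
      have := hE n
      nlinarith [mul_nonneg hp2' ih]
  have hC : ∀ k, 0 ≤ Cc p k := by
    intro k
    induction k with
    | zero =>
      have : Cc p 0 = 0 := by simp only [Cc, Bb, Aa]; ring
      rw [this]
    | succ n ih =>
      have hrec : Cc p (n + 1) = (p + 1) * Cc p n + Dd p n := by
        simp only [Dd]; ring
      rw [hrec]
      have := hD n
      nlinarith [mul_nonneg hp1' ih]
  have hB : ∀ k, 0 ≤ Bb p k := by
    intro k
    induction k with
    | zero =>
      have : Bb p 0 = 0 := by simp only [Bb, Aa]; ring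
      rw [this]
    | succ n ih =>
      have hrec : Bb p (n + 1) = 2 * Bb p n + Cc p n := by
        simp only [Cc]; ring
      rw [hrec]
      have := hC n
      linarith
  have hA : ∀ k, 0 ≤ Aa p k := by
    intro k
    induction k with
    | zero =>
      have : Aa p 0 = 0 := by simp only [Aa]; ring
      rw [this]
    | succ n ih =>
      have hrec : Aa p (n + 1) = Aa p n + Bb p n := by
        simp only [Bb]; ring
      rw [hrec]
      have := hB n
      linarith
  have := hA k
  simpa only [Aa] using this
end

section
/- For p ∈ [−1, 0] and every integer k ≥ 1, one has (p+1)^k (3p³ − 3p² − 3p − 1) + 1 ≥ 0. -/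
theorem J1_nonneg (p : ℝ) (hp : p ∈ Set.Icc (-1 : ℝ) 0) (k : ℕ) (hk : 1 ≤ k) :
    0 ≤ (p + 1) ^ k * (3 * p ^ 3 - 3 * p ^ 2 - 3 * p - 1) + 1 := by
  obtain ⟨h1, h2⟩ := hp
  have hb0 : (0:ℝ) ≤ p + 1 := by linarith
  have hb1 : p + 1 ≤ 1 := by linarith
  have hneg : 3 * p ^ 3 - 3 * p ^ 2 - 3 * p - 1 ≤ 0 := by nlinarith [sq_nonneg p, sq_nonneg (p+1)]
  have hpow : (p + 1) ^ k ≤ (p + 1) ^ 1 := pow_le_pow_of_le_one hb0 hb1 hk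
  have := mul_le_mul_of_nonpos_right hpow hneg
  simp only [pow_one] at this
  nlinarith [sq_nonneg p, sq_nonneg (p+1), sq_nonneg (p*(p+1)), mul_nonneg (neg_nonneg.mpr h2) (neg_nonneg.mpr h2)]
end

section
/- For p ∈ [−1, 0] and every integer k ≥ 1, one has (p+2)^k (−3p³ + 6p²) − p^{k+3} ≥ 0. -/
theorem J2_nonneg (p : ℝ) (hp : p ∈ Set.Icc (-1 : ℝ) 0) (k : ℕ) (hk : 1 ≤ k) :
    0 ≤ (p + 2) ^ k * (-3 * p ^ 3 + 6 * p ^ 2) - p ^ (k + 3) := by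
  obtain ⟨h1, h2⟩ := hp
  have hp2 : (1:ℝ) ≤ p + 2 := by linarith
  have hA : 0 ≤ -3 * p ^ 3 + 6 * p ^ 2 := by nlinarith [sq_nonneg p]
  have hpow : (1:ℝ) ≤ (p + 2) ^ k := one_le_pow₀ hp2
  rcases Nat.even_or_odd k with ⟨m, hm⟩ | ⟨m, hm⟩
  · -- k even, so k+3 odd: p^(k+3) ≤ 0
    have : p ^ (k + 3) ≤ 0 := by
      have : Odd (k + 3) := by exact ⟨m + 1, by omega⟩
      exact this.pow_nonpos h2
    have h0 : 0 ≤ (p + 2) ^ k * (-3 * p ^ 3 + 6 * p ^ 2) :=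
      mul_nonneg (by linarith) hA
    linarith
  · -- k odd: k+3 even, p^(k+3) = (p^2)^(m+2) ≤ p^4
    have hk3 : k + 3 = 2 * (m + 2) := by omega
    have hsq : p ^ 2 ≤ 1 := by nlinarith
    have hb : p ^ (k + 3) ≤ p ^ 4 := by
      rw [hk3, pow_mul]
      have : (p ^ 2) ^ (m + 2) ≤ (p ^ 2) ^ 2 :=
        pow_le_pow_of_le_one (sq_nonneg p) hsq (by omega)
      calc (p ^ 2) ^ (m + 2) ≤ (p ^ 2) ^ 2 := this
        _ = p ^ 4 := by ring
    have hmono : (p + 2) ≤ (p + 2) ^ k := by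
      calc (p + 2) = (p + 2) ^ 1 := (pow_one _).symm
        _ ≤ (p + 2) ^ k := pow_le_pow_right₀ (by linarith) hk
    have key : 0 ≤ (p + 2) * (-3 * p ^ 3 + 6 * p ^ 2) - p ^ 4 := by
      nlinarith [sq_nonneg p, sq_nonneg (p*p), mul_nonneg (sq_nonneg p) (sq_nonneg p)]
    have : (p + 2) * (-3 * p ^ 3 + 6 * p ^ 2) ≤ (p + 2) ^ k * (-3 * p ^ 3 + 6 * p ^ 2) :=
      mul_le_mul_of_nonneg_right hmono hA
    linarith
end

section
/- For p ∈ [−1, 0] and every integer k ≥ 6, one has (p+3)^k (p−1)^3 − 4(p+2)^k + 3^k + 4·2^k ≥ 0. -/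
lemma pow_aux (k : ℕ) (hk : 4 ≤ k) : (4:ℝ) * 2 ^ k ≤ 3 ^ k := by
  induction k, hk using Nat.le_induction with
  | base => norm_num
  | succ n hn ih =>
    have h2 : (0:ℝ) ≤ 3 ^ n := by positivity
    calc (4:ℝ) * 2 ^ (n+1) = 2 * (4 * 2 ^ n) := by ring
      _ ≤ 2 * 3 ^ n := by linarith
      _ ≤ 3 ^ (n+1) := by rw [pow_succ]; nlinarith

lemma lemL (p : ℝ) (h1 : -1 ≤ p) (h0 : p ≤ 0) (k : ℕ) (hk : 6 ≤ k) :
    (p + 3) ^ k * (1 - p) ^ 3 ≤ 3 ^ k * (1 - p) - 4 * 2 ^ k * p := by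
  have ht : (0:ℝ) ≤ -p := by linarith
  have htt : -p ≤ 1 := by linarith
  induction k, hk using Nat.le_induction with
  | base =>
    have e4 : (-p)^4 ≤ (-p)^3 := pow_le_pow_of_le_one ht htt (by norm_num)
    have e7 : (-p)^7 ≤ (-p)^3 := pow_le_pow_of_le_one ht htt (by norm_num)
    have e9 : (-p)^9 ≤ (-p)^3 := pow_le_pow_of_le_one ht htt (by norm_num)
    have e3 : (-p)^3 ≤ -p := by simpa using pow_le_pow_of_le_one ht htt (show 1 ≤ 3 by norm_num)
    nlinarith [e4, e7, e9, e3, pow_nonneg ht 2, pow_nonneg ht 5, pow_nonneg ht 6,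
      pow_nonneg ht 8, ht]
  | succ n hn ih =>
    have h3 : (0:ℝ) ≤ p + 3 := by linarith
    have step1 : (p + 3) ^ (n+1) * (1 - p) ^ 3 ≤ (p + 3) * (3 ^ n * (1 - p) - 4 * 2 ^ n * p) := by
      have := mul_le_mul_of_nonneg_left ih h3
      calc (p + 3) ^ (n+1) * (1 - p) ^ 3 = (p+3) * ((p + 3) ^ n * (1 - p) ^ 3) := by ring
        _ ≤ (p + 3) * (3 ^ n * (1 - p) - 4 * 2 ^ n * p) := this
    have key : (0:ℝ) ≤ (-p) * (3 ^ n * (1 - p) - 4 * 2 ^ n * (p + 1)) := by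
      apply mul_nonneg ht
      have h4 : (4:ℝ) * 2 ^ n ≤ 3 ^ n := pow_aux n (by omega)
      have hp2 : (0:ℝ) ≤ 2 ^ n := by positivity
      have hp3 : (0:ℝ) ≤ 3 ^ n := by positivity
      nlinarith
    have step2 : (p + 3) * (3 ^ n * (1 - p) - 4 * 2 ^ n * p)
        ≤ 3 ^ (n+1) * (1 - p) - 4 * 2 ^ (n+1) * p := by
      rw [pow_succ, pow_succ]; nlinarith [key]
    linarith

theorem J3_nonneg (p : ℝ) (hp : p ∈ Set.Icc (-1 : ℝ) 0) (k : ℕ) (hk : 6 ≤ k) :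
    0 ≤ (p + 3) ^ k * (p - 1) ^ 3 - 4 * (p + 2) ^ k + 3 ^ k + 4 * 2 ^ k := by
  obtain ⟨h1, h0⟩ := hp
  have ht : (0:ℝ) ≤ -p := by linarith
  have htt : -p ≤ 1 := by linarith
  induction k, hk using Nat.le_induction with
  | base =>
    have e4 : (-p)^4 ≤ (-p)^3 := pow_le_pow_of_le_one ht htt (by norm_num)
    have e7 : (-p)^7 ≤ (-p)^3 := pow_le_pow_of_le_one ht htt (by norm_num)
    have e9 : (-p)^9 ≤ (-p)^3 := pow_le_pow_of_le_one ht htt (by norm_num)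
    have e3 : (-p)^3 ≤ -p := by simpa using pow_le_pow_of_le_one ht htt (show 1 ≤ 3 by norm_num)
    nlinarith [e4, e7, e9, e3, pow_nonneg ht 2, pow_nonneg ht 5, pow_nonneg ht 6,
      pow_nonneg ht 8, ht]
  | succ n hn ih =>
    have hL := lemL p h1 h0 n hn
    have hF : 0 ≤ (p + 2) * ((p + 3) ^ n * (p - 1) ^ 3 - 4 * (p + 2) ^ n + 3 ^ n + 4 * 2 ^ n) :=
      mul_nonneg (by linarith) ih
    have expand : (p + 3) ^ (n+1) * (p - 1) ^ 3 - 4 * (p + 2) ^ (n+1) + 3 ^ (n+1) + 4 * 2 ^ (n+1)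
        = (p + 2) * ((p + 3) ^ n * (p - 1) ^ 3 - 4 * (p + 2) ^ n + 3 ^ n + 4 * 2 ^ n)
          + (3 ^ n * (1 - p) - 4 * 2 ^ n * p - (p + 3) ^ n * (1 - p) ^ 3) := by ring
    linarith
end

section
/- Let r₁, r₂ > 0 and d > 0, and define x = 1 + [d(d+2r₂) + √((d+2r₁+2r₂)(d+2r₂)(d+2r₁)d)] / (2(d+r₁+r₂) r₁). Then x > 1 and x − 1/x = 2√(2r₂/((r₁+r₂)r₁)) · d^{1/2} + O(d^{3/2}) as d → 0⁺; more precisely, (x − 1/x) − 2√(2r₂/((r₁+r₂)r₁)) d^{1/2} = O(d^{3/2}). -/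
open Real

set_option maxHeartbeats 1000000

theorem x_asymptotics (r₁ r₂ : ℝ) (hr₁ : 0 < r₁) (hr₂ : 0 < r₂)
    (x : ℝ → ℝ)
    (hx : ∀ d, x d = 1 +
      (d * (d + 2 * r₂) +
        Real.sqrt ((d + 2 * r₁ + 2 * r₂) * (d + 2 * r₂) * (d + 2 * r₁) * d)) /
        (2 * (d + r₁ + r₂) * r₁)) :
    (∀ d > (0 : ℝ), 1 < x d) ∧
      ∃ C > (0 : ℝ), ∃ δ > (0 : ℝ), ∀ d, 0 < d → d < δ →
        |(x d - 1 / x d) -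
            2 * Real.sqrt (2 * r₂ / ((r₁ + r₂) * r₁)) * Real.sqrt d|
          ≤ C * d ^ ((3 : ℝ) / 2) := by
  have hgt : ∀ d > (0 : ℝ), 1 < x d := by
    intro d hd
    rw [hx d]
    have h1 : 0 < (d * (d + 2 * r₂) +
        Real.sqrt ((d + 2 * r₁ + 2 * r₂) * (d + 2 * r₂) * (d + 2 * r₁) * d)) /
        (2 * (d + r₁ + r₂) * r₁) :=
      div_pos (by positivity) (by positivity)
    linarith
  refine ⟨hgt, ?_⟩
  set k := Real.sqrt (8 * r₂ / ((r₁ + r₂) * r₁)) with hkdef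
  have hk0 : 0 < k := Real.sqrt_pos.mpr (by positivity)
  refine ⟨(4*(r₁^3+r₂^3)+4*(r₁^2+r₂^2)+(r₁+r₂)) / ((r₁+r₂)^3*r₁^2) / k,
    by positivity, 1, one_pos, ?_⟩
  intro d hd hd1
  set C₁ := (4*(r₁^3+r₂^3)+4*(r₁^2+r₂^2)+(r₁+r₂)) / ((r₁+r₂)^3*r₁^2) with hC1def
  have hC1pos : 0 < C₁ := by rw [hC1def]; positivity
  set s := Real.sqrt ((d + 2 * r₁ + 2 * r₂) * (d + 2 * r₂) * (d + 2 * r₁) * d) with hsdef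
  have hs0 : 0 ≤ s := Real.sqrt_nonneg _
  have hs2 : s ^ 2 = (d + 2 * r₁ + 2 * r₂) * (d + 2 * r₂) * (d + 2 * r₁) * d :=
    Real.sq_sqrt (by positivity)
  have hden : (2 * (d + r₁ + r₂) * r₁) ≠ 0 := by positivity
  have hxv : x d = (2 * (d + r₁ + r₂) * r₁ + (d * (d + 2 * r₂) + s)) / (2 * (d + r₁ + r₂) * r₁) := by
    rw [hx d, one_add_div hden]
  have hinv : x d * ((2 * (d + r₁ + r₂) * r₁ + (d * (d + 2 * r₂) - s)) /
      (2 * (d + r₁ + r₂) * r₁)) = 1 := by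
    rw [hxv, div_mul_div_comm, div_eq_one_iff_eq (by positivity)]
    linear_combination -hs2
  have hone : (2 * (d + r₁ + r₂) * r₁ + (d * (d + 2 * r₂) - s)) /
      (2 * (d + r₁ + r₂) * r₁) = 1 / x d :=
    eq_one_div_of_mul_eq_one_left (by rw [mul_comm]; exact hinv)
  have hkey : x d - 1 / x d = s / ((d + r₁ + r₂) * r₁) := by
    rw [← hone, hxv, div_sub_div_same, div_eq_div_iff (by positivity) (by positivity)]
    ring
  set b := s / ((d + r₁ + r₂) * r₁) with hbdef
  set a := k * Real.sqrt d with hadef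
  have hsd : 0 < Real.sqrt d := Real.sqrt_pos.mpr hd
  have ha0 : 0 < a := mul_pos hk0 hsd
  have hb0 : 0 ≤ b := div_nonneg hs0 (by positivity)
  have hk2 : k ^ 2 = 8 * r₂ / ((r₁ + r₂) * r₁) := Real.sq_sqrt (by positivity)
  have ha2 : a ^ 2 = 8 * r₂ / ((r₁ + r₂) * r₁) * d := by
    rw [hadef, mul_pow, hk2, Real.sq_sqrt hd.le]
  have hb2 : b ^ 2 = ((d + 2 * r₁ + 2 * r₂) * (d + 2 * r₂) * (d + 2 * r₁) * d) /
      ((d + r₁ + r₂) * r₁) ^ 2 := by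
    rw [hbdef, div_pow, hs2]
  have hident : ((d + 2 * r₁ + 2 * r₂) * (d + 2 * r₂) * (d + 2 * r₁) * d) * ((r₁ + r₂) * r₁)
      - 8 * r₂ * d * ((d + r₁ + r₂) * r₁) ^ 2
      = d ^ 2 * r₁ * (4 * (r₁ ^ 3 + r₂ ^ 3) + 4 * d * (r₁ ^ 2 + r₂ ^ 2) + d ^ 2 * (r₁ + r₂)) := by
    ring
  have hhpos : 0 ≤ d ^ 2 * r₁ * (4 * (r₁ ^ 3 + r₂ ^ 3) + 4 * d * (r₁ ^ 2 + r₂ ^ 2) + d ^ 2 * (r₁ + r₂)) := by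
    positivity
  have h1 : a ^ 2 ≤ b ^ 2 := by
    rw [ha2, hb2, div_mul_eq_mul_div, div_le_div_iff₀ (by positivity) (by positivity)]
    nlinarith [hident, hhpos]
  have hab : a ≤ b := by
    have := Real.sqrt_le_sqrt h1
    rwa [Real.sqrt_sq ha0.le, Real.sqrt_sq hb0] at this
  -- bound on b^2 - a^2
  have heq : b ^ 2 - a ^ 2 = d ^ 2 * (4 * (r₁ ^ 3 + r₂ ^ 3) + 4 * d * (r₁ ^ 2 + r₂ ^ 2) + d ^ 2 * (r₁ + r₂))
      / ((d + r₁ + r₂) ^ 2 * ((r₁ + r₂) * r₁ ^ 2)) := by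
    rw [ha2, hb2]
    field_simp
    ring
  have hhH : 4 * (r₁ ^ 3 + r₂ ^ 3) + 4 * d * (r₁ ^ 2 + r₂ ^ 2) + d ^ 2 * (r₁ + r₂)
      ≤ 4 * (r₁ ^ 3 + r₂ ^ 3) + 4 * (r₁ ^ 2 + r₂ ^ 2) + (r₁ + r₂) := by
    have e1 : d * (r₁ ^ 2 + r₂ ^ 2) ≤ r₁ ^ 2 + r₂ ^ 2 := by nlinarith [sq_nonneg r₁, sq_nonneg r₂]
    have hd2 : d ^ 2 ≤ 1 := by nlinarith [mul_nonneg hd.le (sub_nonneg.mpr hd1.le)]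
    have e2 : d ^ 2 * (r₁ + r₂) ≤ r₁ + r₂ := by
      nlinarith [mul_nonneg (sub_nonneg.mpr hd2) (show (0:ℝ) ≤ r₁ + r₂ by positivity)]
    linarith
  have hdiff : b ^ 2 - a ^ 2 ≤ C₁ * d ^ 2 := by
    rw [heq, hC1def, div_mul_eq_mul_div, div_le_div_iff₀ (by positivity) (by positivity)]
    have hDD : (r₁ + r₂) ^ 2 ≤ (d + r₁ + r₂) ^ 2 := by nlinarith
    have hprod := mul_le_mul hhH hDD (by positivity) (by positivity)
    have key := mul_le_mul_of_nonneg_left hprod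
      (show (0:ℝ) ≤ d ^ 2 * ((r₁ + r₂) * r₁ ^ 2) by positivity)
    linarith [key]
  have hstep : (b - a) * a ≤ C₁ * d ^ 2 := by
    have h2 : (b - a) * a ≤ (b - a) * (a + b) :=
      mul_le_mul_of_nonneg_left (le_add_of_nonneg_right hb0) (sub_nonneg.mpr hab)
    nlinarith [h2, hdiff]
  have h32 : d ^ ((3 : ℝ) / 2) = d * Real.sqrt d := by
    rw [show (3 : ℝ) / 2 = 1 + 1 / 2 by norm_num, Real.rpow_add hd, Real.rpow_one,
      Real.sqrt_eq_rpow]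
  have hCa : C₁ / k * d ^ ((3 : ℝ) / 2) * a = C₁ * d ^ 2 := by
    rw [h32, hadef]
    calc C₁ / k * (d * Real.sqrt d) * (k * Real.sqrt d)
        = C₁ / k * k * (d * (Real.sqrt d * Real.sqrt d)) := by ring
      _ = C₁ * (d * d) := by rw [div_mul_cancel₀ _ hk0.ne', Real.mul_self_sqrt hd.le]
      _ = C₁ * d ^ 2 := by ring
  have hka : 2 * Real.sqrt (2 * r₂ / ((r₁ + r₂) * r₁)) * Real.sqrt d = a := by
    rw [hadef, hkdef,
      show 8 * r₂ / ((r₁ + r₂) * r₁) = 4 * (2 * r₂ / ((r₁ + r₂) * r₁)) by ring,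
      Real.sqrt_mul (by norm_num : (0:ℝ) ≤ 4),
      show Real.sqrt 4 = 2 by
        rw [show (4:ℝ) = 2 ^ 2 by norm_num, Real.sqrt_sq (by norm_num : (0:ℝ) ≤ 2)]]
  rw [hkey, hka, abs_of_nonneg (sub_nonneg.mpr hab)]
  refine le_of_mul_le_mul_right ?_ ha0
  rw [hCa]
  exact hstep
end
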